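/- Let n ≥ d ≥ 1, m = C(n,d), λ ∈ (0,1). With Ψ and G as in the quadratic Lyapunov analysis, if Σ_{j∈[n]} q_j > n(1+λ)/(2(1−λ)) then GΨ(x) < 0; moreover sup_x GΨ(x) ≤ nd(λ+1) < ∞. -/

import Mathlib

open scoped BigOperators

/-- Classes are the `d`-element subsets of `[n]`. -/
def classes (n d : ℕ) : Finset (Finset (Fin n)) :=
  Finset.univ.filter (fun i : Finset (Fin n) => i.card = d)

/-- `q_j(x) = Σ_{i : j ∈ i} x_i`, the queue length at server `j` in state `x`. -/
def queueLen (n d : ℕ) (x : Finset (Fin n) → ℕ) (j : Fin n) : ℕ :=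
  ∑ i ∈ (classes n d).filter (fun i => j ∈ i), x i

/-- The quadratic Lyapunov function `Ψ(x) = Σ_j q_j²`. -/
noncomputable def lyap (n d : ℕ) (x : Finset (Fin n) → ℕ) : ℝ :=
  ∑ j : Fin n, ((queueLen n d x j : ℝ)) ^ 2

/-- The generator applied to `Ψ`: arrivals at rate `nλ/m` per class,
departures at rate `x_i Σ_{j∈i} 1/q_j`. -/
noncomputable def genLyap (n d : ℕ) (lam : ℝ) (x : Finset (Fin n) → ℕ) : ℝ :=
  ∑ i ∈ classes n d,
    (((n : ℝ) * lam / (n.choose d : ℝ)) *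
        (lyap n d (Function.update x i (x i + 1)) - lyap n d x) +
      (x i : ℝ) * (∑ j ∈ i, 1 / (queueLen n d x j : ℝ)) *
        (lyap n d (Function.update x i (x i - 1)) - lyap n d x))

/-!
Arrivals to class `i` raise `Ψ` by `∑_{j∈i} (2 q_j + 1)`, and every server lies in `d m / n`
classes, so arrivals contribute exactly `λ d ∑_j (2 q_j + 1)`. A departure from class `i` changes
`Ψ` by `∑_{j∈i} (1 - 2 q_j)`; Cauchy–Schwarz, `(∑_{j∈i} 1 / q_j) (∑_{j∈i} q_j) ≥ d²`, and
exchanging the sums over classes and servers (which turns `∑_i x_i ∑_{j∈i} 1 / q_j` into `B(x)`)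
bound the departures by `d B(x) - 2 d ∑_j q_j`. Hence
`GΨ(x) ≤ 2 d (λ - 1) ∑_j q_j + d (n λ + B(x))` with `B(x) ≤ n`, and both claims follow.
-/

open Finset Function

/-- `B(x)`, the number of busy servers. -/
def busyServers (n d : ℕ) (x : Finset (Fin n) → ℕ) : ℕ :=
  #{j | queueLen n d x j ≠ 0}

lemma busyServers_le (n d : ℕ) (x : Finset (Fin n) → ℕ) : busyServers n d x ≤ n :=
  (card_filter_le _ _).trans_eq (card_fin n)

section

variable {n d : ℕ}

lemma classes_eq_powersetCard : classes n d = powersetCard d univ := by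
  ext i
  simp [classes]

lemma card_classes_filter_mem (hd : 1 ≤ d) (j : Fin n) :
    #{i ∈ classes n d | j ∈ i} = (n - 1).choose (d - 1) := by
  simp_rw [← singleton_subset_iff, classes_eq_powersetCard]
  rw [card_filter_powersetCard_subset _ _ _ (subset_univ _) (by simpa using hd)]
  simp

lemma mul_card_classes_filter_mem (hd : 1 ≤ d) (hdn : d ≤ n) (j : Fin n) :
    n * #{i ∈ classes n d | j ∈ i} = d * n.choose d := by
  obtain ⟨n, rfl⟩ := Nat.exists_add_one_eq.mpr (hd.trans hdn)
  obtain ⟨d, rfl⟩ := Nat.exists_add_one_eq.mpr hd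
  rw [card_classes_filter_mem hd, Nat.add_sub_cancel, Nat.add_sub_cancel,
    Nat.add_one_mul_choose_eq, mul_comm]

lemma sum_classes_sum_mem {M : Type*} [AddCommMonoid M] (F : Finset (Fin n) → Fin n → M) :
    ∑ i ∈ classes n d, ∑ j ∈ i, F i j = ∑ j, ∑ i ∈ classes n d with j ∈ i, F i j :=
  sum_comm' (by simp)

variable (x : Finset (Fin n) → ℕ) {i : Finset (Fin n)} {j : Fin n}

lemma sum_classes_sum_mem_mul (g : Fin n → ℝ) :
    ∑ i ∈ classes n d, ∑ j ∈ i, (x i : ℝ) * g j = ∑ j, (queueLen n d x j : ℝ) * g j := by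
  simp [sum_classes_sum_mem, queueLen, sum_mul]

lemma le_queueLen (hi : i ∈ classes n d) (hj : j ∈ i) : x i ≤ queueLen n d x j :=
  single_le_sum (fun _ _ ↦ Nat.zero_le _) (mem_filter.mpr ⟨hi, hj⟩)

lemma queueLen_update_of_notMem (hj : j ∉ i) (v : ℕ) :
    queueLen n d (update x i v) j = queueLen n d x j :=
  sum_congr rfl fun i' hi' ↦ update_of_ne (by rintro rfl; exact hj (mem_filter.mp hi').2) _ _

lemma queueLen_update_of_mem (hi : i ∈ classes n d) (hj : j ∈ i) (v : ℕ) :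
    (queueLen n d (update x i v) j : ℝ) = queueLen n d x j + (v - x i) := by
  have hmem : i ∈ {i ∈ classes n d | j ∈ i} := mem_filter.mpr ⟨hi, hj⟩
  simp only [queueLen, sum_update_of_mem hmem, ← add_sum_erase _ _ hmem,
    sdiff_singleton_eq_erase]
  push_cast
  ring

lemma lyap_update_sub_lyap (hi : i ∈ classes n d) (v : ℕ) :
    lyap n d (update x i v) - lyap n d x
      = ∑ j ∈ i, (2 * queueLen n d x j + (v - x i)) * (v - x i : ℝ) := by
  rw [lyap, lyap, ← sum_sub_distrib, ← sum_subset (subset_univ i) fun j _ hj ↦ by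
    rw [queueLen_update_of_notMem x hj, sub_self]]
  refine sum_congr rfl fun j hj ↦ ?_
  rw [queueLen_update_of_mem x hi hj]
  ring

lemma sum_queueLen_mul_inv :
    ∑ j, (queueLen n d x j : ℝ) * (queueLen n d x j : ℝ)⁻¹ = busyServers n d x := by
  rw [busyServers, natCast_card_filter]
  refine sum_congr rfl fun j _ ↦ ?_
  split_ifs with h
  · exact mul_inv_cancel₀ (Nat.cast_ne_zero.mpr h)
  · simp_all

lemma sum_arrival_drift (hd : 1 ≤ d) (hdn : d ≤ n) (lam : ℝ) :
    ∑ i ∈ classes n d,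
        (n * lam / n.choose d : ℝ) * (lyap n d (update x i (x i + 1)) - lyap n d x)
      = lam * d * ∑ j, (2 * queueLen n d x j + 1 : ℝ) := by
  have hm : (n.choose d : ℝ) ≠ 0 := by exact_mod_cast (Nat.choose_pos hdn).ne'
  calc _ = (n * lam / n.choose d : ℝ) *
        ∑ i ∈ classes n d, ∑ j ∈ i, (2 * queueLen n d x j + 1 : ℝ) := by
        rw [mul_sum]
        refine sum_congr rfl fun i hi ↦ ?_
        rw [lyap_update_sub_lyap x hi]
        push_cast
        simp only [add_sub_cancel_left, mul_one]
    _ = ∑ j, (n * lam / n.choose d : ℝ) *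
        (#{i ∈ classes n d | j ∈ i} * (2 * queueLen n d x j + 1 : ℝ)) := by
        rw [sum_classes_sum_mem, mul_sum]
        simp only [sum_const, nsmul_eq_mul]
    _ = _ := by
        rw [mul_sum]
        refine sum_congr rfl fun j _ ↦ ?_
        have hcount : (n : ℝ) * #{i ∈ classes n d | j ∈ i} = d * n.choose d := by
          exact_mod_cast mul_card_classes_filter_mem hd hdn j
        have hrate : (n * lam / n.choose d : ℝ) * #{i ∈ classes n d | j ∈ i} = lam * d := by
          rw [div_mul_eq_mul_div, div_eq_iff hm]
          linear_combination lam * hcount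
        rw [← mul_assoc, hrate]

lemma departure_term_le (hi : i ∈ classes n d) :
    (x i : ℝ) * (∑ j ∈ i, 1 / (queueLen n d x j : ℝ)) *
        (lyap n d (update x i (x i - 1)) - lyap n d x)
      ≤ ∑ j ∈ i, (x i : ℝ) * (#i * (queueLen n d x j : ℝ)⁻¹ - 2 * #i) := by
  rcases Nat.eq_zero_or_pos (x i) with h0 | hpos
  · simp [h0]
  have hq : ∀ j ∈ i, (0 : ℝ) < queueLen n d x j := fun j hj ↦ by
    exact_mod_cast hpos.trans_le (le_queueLen x hi hj)
  have hcs : (#i : ℝ) ^ 2 ≤ (∑ j ∈ i, 1 / (queueLen n d x j : ℝ)) *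
      ∑ j ∈ i, (queueLen n d x j : ℝ) := by
    simpa using sum_sq_le_sum_mul_sum_of_sq_le_mul i (r := fun _ ↦ 1)
      (fun j hj ↦ (one_div_pos.mpr (hq j hj)).le) (fun j hj ↦ (hq j hj).le)
      (fun j hj ↦ by simp [(hq j hj).ne'])
  have hΔ : lyap n d (update x i (x i - 1)) - lyap n d x
      = #i - 2 * ∑ j ∈ i, (queueLen n d x j : ℝ) := by
    calc _ = ∑ j ∈ i, (1 - 2 * (queueLen n d x j : ℝ)) := by
          rw [lyap_update_sub_lyap x hi, Nat.cast_sub hpos]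
          exact sum_congr rfl fun _ _ ↦ by push_cast; ring
      _ = _ := by simp [sum_sub_distrib, mul_sum]
  rw [hΔ]
  simp only [one_div] at hcs ⊢
  simp only [mul_sub, sum_sub_distrib, ← mul_sum, sum_const, nsmul_eq_mul]
  nlinarith [mul_le_mul_of_nonneg_left hcs (Nat.cast_nonneg (x i) : (0 : ℝ) ≤ x i)]

lemma sum_departure_drift_le :
    ∑ i ∈ classes n d, (x i : ℝ) * (∑ j ∈ i, 1 / (queueLen n d x j : ℝ)) *
        (lyap n d (update x i (x i - 1)) - lyap n d x)
      ≤ d * busyServers n d x - 2 * d * ∑ j, (queueLen n d x j : ℝ) :=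
  calc _ ≤ ∑ i ∈ classes n d, ∑ j ∈ i, (x i : ℝ) * (d * (queueLen n d x j : ℝ)⁻¹ - 2 * d) :=
        sum_le_sum fun i hi ↦ by
          simpa [(mem_filter.mp hi).2] using departure_term_le x hi
    _ = _ := by
        rw [sum_classes_sum_mem_mul, ← sum_queueLen_mul_inv, mul_sum, mul_sum, ← sum_sub_distrib]
        exact sum_congr rfl fun _ _ ↦ by ring

lemma genLyap_le (hd : 1 ≤ d) (hdn : d ≤ n) (lam : ℝ) :
    genLyap n d lam x ≤ 2 * d * (lam - 1) * ∑ j, (queueLen n d x j : ℝ)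
      + d * (n * lam + busyServers n d x) := by
  have hdep := sum_departure_drift_le (d := d) x
  rw [genLyap, sum_add_distrib, sum_arrival_drift x hd hdn lam]
  simp only [sum_add_distrib, ← mul_sum, sum_const, card_univ, Fintype.card_fin,
    nsmul_eq_mul, mul_one]
  linarith

end

/-- Negative drift outside a compact set, and a uniform upper bound on the drift. -/
theorem genLyap_negative_drift (n d : ℕ) (hd : 1 ≤ d) (hdn : d ≤ n) (lam : ℝ)
    (hl : lam ∈ Set.Ioo (0 : ℝ) 1) :
    (∀ x : Finset (Fin n) → ℕ,
      (n : ℝ) * (1 + lam) / (2 * (1 - lam)) < (∑ j : Fin n, (queueLen n d x j : ℝ)) →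
        genLyap n d lam x < 0) ∧
    (∀ x : Finset (Fin n) → ℕ, genLyap n d lam x ≤ (n : ℝ) * (d : ℝ) * (lam + 1)) := by
  have hd0 : (0 : ℝ) < d := by exact_mod_cast hd
  have hdrift (x : Finset (Fin n) → ℕ) : genLyap n d lam x
      ≤ 2 * d * (lam - 1) * ∑ j, (queueLen n d x j : ℝ) + n * d * (lam + 1) := by
    have hB : (busyServers n d x : ℝ) ≤ n := by exact_mod_cast busyServers_le n d x
    nlinarith [genLyap_le x hd hdn lam]
  refine ⟨fun x hx ↦ ?_, fun x ↦ ?_⟩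
  · rw [div_lt_iff₀ (by linarith [hl.2])] at hx
    nlinarith [hdrift x]
  · have hQ : 0 ≤ ∑ j, (queueLen n d x j : ℝ) := sum_nonneg fun _ _ ↦ Nat.cast_nonneg _
    nlinarith [hdrift x, mul_nonneg (mul_nonneg hd0.le (sub_nonneg.mpr hl.2.le)) hQ]
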